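/- Fix C2 > 0 and m1, m2 ∈ ℝ, and set |m| = √(m1² + m2²). For every l > |m| + √(2·C2), the derivative of g(l) = l⁻⁴ · (9 + exp(2l(l − 2m2)/C2) + exp(2l(l + √3·m1 + m2)/C2) + exp(2l(l − √3·m1 + m2)/C2)) is strictly positive; consequently g is strictly increasing on the interval (|m| + √(2·C2), ∞) and no global minimizer of g over (0,∞) lies in that interval. -/

import Mathlib

/-!
Write the three exponents as `2l(l + aᵢ)/C2`, where `aᵢ = 2⟪m, uᵢ⟫` for unit vectors `uᵢ`
at mutual angles `2π/3`. With `eᵢ` the exponentials, `l⁵ g'(l) = ∑ eᵢ (l(4l + 2aᵢ)/C2 - 4) - 36`.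
Since `aᵢ ≥ -2|m|`, every bracket exceeds `4` once `l > |m| + √(2C2)`; since some `aⱼ ≥ |m|`,
the matching exponent exceeds `4`, so `eⱼ > e⁴ > 9` and that term alone beats `36`.
-/

open Real

/-- The (rescaled) variance `S(l; C2)` of the error on the estimate of `C2`,
as a function of the edge length `l`. -/
noncomputable def errVarC2 (C2 m1 m2 l : ℝ) : ℝ :=
  (l ^ 4)⁻¹ * (9 + Real.exp (2 * l * (l - 2 * m2) / C2)
    + Real.exp (2 * l * (l + Real.sqrt 3 * m1 + m2) / C2)
    + Real.exp (2 * l * (l - Real.sqrt 3 * m1 + m2) / C2))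

open Finset

theorem HasDerivAt.inv_pow_mul {f : ℝ → ℝ} {f' x : ℝ} (hf : HasDerivAt f f' x) (hx : x ≠ 0)
    (n : ℕ) :
    HasDerivAt (fun y => (y ^ n)⁻¹ * f y) ((x * f' - n * f x) / x ^ (n + 1)) x := by
  refine (((hasDerivAt_pow n x).inv (pow_ne_zero n hx)).fun_mul hf).congr_deriv ?_
  rcases n with _ | n
  · field_simp
    simp
  · simp only [Nat.add_sub_cancel, Pi.inv_apply]
    field_simp
    ring

theorem abs_mul_add_mul_le_sqrt_mul_sqrt (p q x y : ℝ) :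
    |p * x + q * y| ≤ √(p ^ 2 + q ^ 2) * √(x ^ 2 + y ^ 2) := by
  rw [← sqrt_mul (by positivity)]
  exact abs_le_sqrt (by nlinarith [sq_nonneg (p * y - q * x)])

theorem nine_lt_exp_of_four_lt {x : ℝ} (hx : 4 < x) : 9 < exp x := by
  nlinarith [quadratic_le_exp_of_nonneg (by linarith : (0 : ℝ) ≤ x)]

theorem eight_mul_lt_of_add_sqrt_lt {C ρ a l : ℝ} (hC : 0 < C) (hρ : 0 ≤ ρ)
    (ha : -(2 * ρ) ≤ a) (hl : ρ + √(2 * C) < l) : 8 * C < l * (4 * l + 2 * a) := by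
  have hs : √(2 * C) ^ 2 = 2 * C := sq_sqrt (by positivity)
  have hs0 : 0 ≤ √(2 * C) := sqrt_nonneg _
  nlinarith [mul_le_mul_of_nonneg_left ha (by linarith : 0 ≤ 2 * l),
    mul_lt_mul'' (by linarith : √(2 * C) < l - ρ) (by linarith : √(2 * C) < l) hs0 hs0]

section SensorVar

variable {ι : Type*} [Fintype ι]

noncomputable def sensorVar (C : ℝ) (a : ι → ℝ) (l : ℝ) : ℝ :=
  (l ^ 4)⁻¹ * (9 + ∑ i, exp (2 * l * (l + a i) / C))

theorem hasDerivAt_sensorVar (C : ℝ) (a : ι → ℝ) {l : ℝ} (hl : l ≠ 0) :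
    HasDerivAt (sensorVar C a)
      ((∑ i, exp (2 * l * (l + a i) / C) * (l * (4 * l + 2 * a i) / C - 4) - 36) / l ^ 5) l := by
  have hexp (i : ι) : HasDerivAt (fun y => exp (2 * y * (y + a i) / C))
      (exp (2 * l * (l + a i) / C) * ((4 * l + 2 * a i) / C)) l := by
    refine ((((hasDerivAt_id l).const_mul 2).fun_mul
      ((hasDerivAt_id l).add_const (a i))).div_const C).exp.congr_deriv ?_
    simp only [id]
    ring
  refine (((HasDerivAt.fun_sum fun i _ => hexp i).const_add 9).inv_pow_mul hl 4).congr_deriv ?_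
  have hnum : ∑ i, exp (2 * l * (l + a i) / C) * (l * (4 * l + 2 * a i) / C - 4)
      = l * ∑ i, exp (2 * l * (l + a i) / C) * ((4 * l + 2 * a i) / C)
        - 4 * ∑ i, exp (2 * l * (l + a i) / C) := by
    rw [mul_sum, mul_sum, ← sum_sub_distrib]
    exact sum_congr rfl fun i _ => by ring
  rw [hnum]
  push_cast
  ring

theorem deriv_sensorVar_pos {C ρ l : ℝ} {a : ι → ℝ} (hC : 0 < C) (hρ : 0 ≤ ρ)
    (ha : ∀ i, -(2 * ρ) ≤ a i) (hmax : ∃ j, ρ ≤ a j) (hl : ρ + √(2 * C) < l) :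
    0 < deriv (sensorVar C a) l := by
  obtain ⟨j, hj⟩ := hmax
  have hs : √(2 * C) ^ 2 = 2 * C := sq_sqrt (by positivity)
  have hl0 : 0 < l := by linarith [sqrt_pos.2 (by linarith : 0 < 2 * C)]
  have hfactor (i : ι) : 4 < l * (4 * l + 2 * a i) / C - 4 := by
    have := eight_mul_lt_of_add_sqrt_lt hC hρ (ha i) hl
    rw [lt_sub_iff_add_lt, lt_div_iff₀ hC]
    linarith
  have hexp : 9 < exp (2 * l * (l + a j) / C) := by
    refine nine_lt_exp_of_four_lt ((lt_div_iff₀ hC).2 ?_)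
    nlinarith [mul_nonneg hl0.le (hρ.trans hj), sqrt_nonneg (2 * C)]
  have hsum : 36 < ∑ i, exp (2 * l * (l + a i) / C) * (l * (4 * l + 2 * a i) / C - 4) :=
    calc (36 : ℝ) = 9 * 4 := by norm_num
      _ < exp (2 * l * (l + a j) / C) * (l * (4 * l + 2 * a j) / C - 4) :=
        mul_lt_mul hexp (hfactor j).le (by norm_num) (exp_pos _).le
      _ ≤ _ := single_le_sum
        (f := fun i => exp (2 * l * (l + a i) / C) * (l * (4 * l + 2 * a i) / C - 4))
        (fun i _ => mul_nonneg (exp_pos _).le (by linarith [hfactor i])) (mem_univ j)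
  rw [(hasDerivAt_sensorVar C a hl0.ne').deriv]
  exact div_pos (by linarith) (by positivity)

theorem strictMonoOn_sensorVar {C ρ : ℝ} {a : ι → ℝ} (hC : 0 < C) (hρ : 0 ≤ ρ)
    (ha : ∀ i, -(2 * ρ) ≤ a i) (hmax : ∃ j, ρ ≤ a j) :
    StrictMonoOn (sensorVar C a) (Set.Ioi (ρ + √(2 * C))) := by
  have hpos : 0 < ρ + √(2 * C) := by positivity
  refine strictMonoOn_of_deriv_pos (convex_Ioi _) (fun l hl => ?_) (fun l hl => ?_)
  · exact (hasDerivAt_sensorVar C a (hpos.trans hl).ne').continuousAt.continuousWithinAt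
  · rw [interior_Ioi] at hl
    exact deriv_sensorVar_pos hC hρ ha hmax hl

end SensorVar

/-- `2⟪m, u⟫` for `u = (0, -1), (√3/2, 1/2), (-√3/2, 1/2)`. -/
noncomputable def hexOffsets (m1 m2 : ℝ) : Fin 3 → ℝ :=
  ![-(2 * m2), √3 * m1 + m2, -(√3 * m1) + m2]

theorem errVarC2_eq_sensorVar (C2 m1 m2 : ℝ) :
    errVarC2 C2 m1 m2 = sensorVar C2 (hexOffsets m1 m2) := by
  ext l
  simp only [errVarC2, sensorVar, hexOffsets, Fin.sum_univ_three, Matrix.cons_val_zero,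
    Matrix.cons_val_one, Matrix.cons_val]
  ring_nf

theorem neg_two_mul_sqrt_le_hexOffsets (m1 m2 : ℝ) (i : Fin 3) :
    -(2 * √(m1 ^ 2 + m2 ^ 2)) ≤ hexOffsets m1 m2 i := by
  have h3 : √3 ^ 2 = 3 := sq_sqrt (by norm_num)
  have hunit (p q : ℝ) (hpq : p ^ 2 + q ^ 2 = 4) : -(2 * √(m1 ^ 2 + m2 ^ 2)) ≤ p * m1 + q * m2 := by
    have := abs_mul_add_mul_le_sqrt_mul_sqrt p q m1 m2
    rw [hpq, show (4 : ℝ) = 2 ^ 2 by norm_num, sqrt_sq zero_le_two] at this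
    linarith [neg_abs_le (p * m1 + q * m2)]
  fin_cases i <;> simp only [hexOffsets, Fin.zero_eta, Fin.mk_one, Fin.reduceFinMk,
    Matrix.cons_val_zero, Matrix.cons_val_one, Matrix.cons_val]
  · linarith [hunit 0 (-2) (by norm_num)]
  · linarith [hunit (√3) 1 (by rw [h3]; norm_num)]
  · linarith [hunit (-√3) 1 (by rw [neg_sq, h3]; norm_num)]

theorem exists_sqrt_le_hexOffsets (m1 m2 : ℝ) : ∃ j, √(m1 ^ 2 + m2 ^ 2) ≤ hexOffsets m1 m2 j := by
  have hr0 : 0 ≤ √(m1 ^ 2 + m2 ^ 2) := sqrt_nonneg _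
  have hr2 : √(m1 ^ 2 + m2 ^ 2) ^ 2 = m1 ^ 2 + m2 ^ 2 := sq_sqrt (by positivity)
  have h3 : √3 ^ 2 = 3 := sq_sqrt (by norm_num)
  by_contra! h
  have h0 := h 0
  have h1 := h 1
  have h2 := h 2
  simp only [hexOffsets, Matrix.cons_val] at h0 h1 h2
  -- With `r = |m|`: `|√3 m1| < r - m2` gives `3 (r² - m2²) < (r - m2)²`, i.e. `m2 < -r/2`,
  -- against `-2 m2 < r`.
  nlinarith [sq_nonneg (√3 * m1), mul_self_nonneg (√(m1 ^ 2 + m2 ^ 2) - m2)]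

/-- For `l > |m| + √(2C2)` the derivative of `g` is strictly positive, hence `g` is
strictly increasing there and no global minimizer of `g` lies in that interval. -/
theorem errVarC2_increasing_beyond (C2 m1 m2 : ℝ) (hC2 : 0 < C2) :
    (∀ l : ℝ, Real.sqrt (m1 ^ 2 + m2 ^ 2) + Real.sqrt (2 * C2) < l →
      0 < deriv (errVarC2 C2 m1 m2) l) ∧
    StrictMonoOn (errVarC2 C2 m1 m2)
      (Set.Ioi (Real.sqrt (m1 ^ 2 + m2 ^ 2) + Real.sqrt (2 * C2))) ∧
    (∀ lstar : ℝ, 0 < lstar →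
      (∀ l : ℝ, 0 < l → errVarC2 C2 m1 m2 lstar ≤ errVarC2 C2 m1 m2 l) →
      lstar ∉ Set.Ioi (Real.sqrt (m1 ^ 2 + m2 ^ 2) + Real.sqrt (2 * C2))) := by
  have hρ := sqrt_nonneg (m1 ^ 2 + m2 ^ 2)
  have ha := neg_two_mul_sqrt_le_hexOffsets m1 m2
  have hmax := exists_sqrt_le_hexOffsets m1 m2
  have hmono := strictMonoOn_sensorVar hC2 hρ ha hmax
  rw [errVarC2_eq_sensorVar]
  refine ⟨fun l hl => deriv_sensorVar_pos hC2 hρ ha hmax hl, hmono, ?_⟩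
  intro lstar _ hmin hlstar
  obtain ⟨l, hl, hl_lt⟩ := exists_between (Set.mem_Ioi.1 hlstar)
  exact (hmono hl hlstar hl_lt).not_ge (hmin l (lt_of_le_of_lt (by positivity) hl))
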